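/- Interleaving of timed multistep reductions: if (T, Ω1) ⟹* (T1, Ω1') and (T, Ω2) ⟹* (T2, Ω2') start at the same time T, then (T, Ω1 ∥ Ω2) ⟹* (max(T1,T2), Ω1' ∥ Ω2'), provided the transition system satisfies the frame property that any silent step of a component lifts to a silent step of the concurrent composition with any other configuration on either side. -/
import Mathlib


/-- Timed multistep reduction `(T, Ω) ⟹* (T', Ω')`. -/
inductive MultiStep {Conf : Type*} (step : Conf → ℤ → Conf → Prop) :
    ℤ → Conf → ℤ → Conf → Prop
  | refl (T : ℤ) (Ω : Conf) : MultiStep step T Ω T Ω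
  | stepT {T1 T2 T3 : ℤ} {Ω Ω' : Conf} :
      T1 ≤ T2 → MultiStep step T2 Ω T3 Ω' → MultiStep step T1 Ω T3 Ω'
  | stepC {T1 T2 : ℤ} {Ω Ω' Ω'' : Conf} :
      step Ω T1 Ω' → MultiStep step T1 Ω' T2 Ω'' → MultiStep step T1 Ω T2 Ω''

theorem MultiStep.le {Conf : Type*} {step : Conf → ℤ → Conf → Prop}
    {T T' : ℤ} {Ω Ω' : Conf} (h : MultiStep step T Ω T' Ω') : T ≤ T' := by
  induction h with
  | refl => exact le_refl _
  | stepT h _ ih => exact le_trans h ih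
  | stepC _ _ ih => exact ih

theorem MultiStep.liftL {Conf : Type*} {comp : Conf → Conf → Conf}
    {step : Conf → ℤ → Conf → Prop}
    (frameL : ∀ (Ω T Ω' Ψ), step Ω T Ω' → step (comp Ω Ψ) T (comp Ω' Ψ))
    {T T' : ℤ} {Ω Ω' : Conf} (h : MultiStep step T Ω T' Ω') (Ψ : Conf) :
    MultiStep step T (comp Ω Ψ) T' (comp Ω' Ψ) := by
  induction h with
  | refl => exact .refl _ _
  | stepT h _ ih => exact .stepT h ih
  | stepC s _ ih => exact .stepC (frameL _ _ _ _ s) ih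

theorem MultiStep.liftR {Conf : Type*} {comp : Conf → Conf → Conf}
    {step : Conf → ℤ → Conf → Prop}
    (frameR : ∀ (Ω T Ω' Ψ), step Ω T Ω' → step (comp Ψ Ω) T (comp Ψ Ω'))
    {T T' : ℤ} {Ω Ω' : Conf} (h : MultiStep step T Ω T' Ω') (Ψ : Conf) :
    MultiStep step T (comp Ψ Ω) T' (comp Ψ Ω') := by
  induction h with
  | refl => exact .refl _ _
  | stepT h _ ih => exact .stepT h ih
  | stepC s _ ih => exact .stepC (frameR _ _ _ _ s) ih

/-- Interleaving of timed multistep reductions: assuming framing of silent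
steps on both sides of the concurrent composition `∥`, two multistep
reductions starting at the same time `T` interleave into one for the
concurrent composition, ending at `max T1 T2`. -/
theorem multiStep_interleave {Conf : Type*} (comp : Conf → Conf → Conf)
    (step : Conf → ℤ → Conf → Prop)
    (frameL : ∀ (Ω T Ω' Ψ), step Ω T Ω' → step (comp Ω Ψ) T (comp Ω' Ψ))
    (frameR : ∀ (Ω T Ω' Ψ), step Ω T Ω' → step (comp Ψ Ω) T (comp Ψ Ω'))
    {T T1 T2 : ℤ} {Ω1 Ω1' Ω2 Ω2' : Conf}
    (h1 : MultiStep step T Ω1 T1 Ω1') (h2 : MultiStep step T Ω2 T2 Ω2') :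
    MultiStep step T (comp Ω1 Ω2) (max T1 T2) (comp Ω1' Ω2') := by
  induction h1 generalizing T2 Ω2 Ω2' with
  | refl T Ω1 =>
    rw [max_eq_right h2.le]
    exact h2.liftR frameR Ω1
  | stepC s rest ih =>
    exact .stepC (frameL _ _ _ _ s) (ih h2)
  | stepT hTT' rest ih =>
    rename_i T T' T1 Ω1 Ω1'
    -- inner claim: for any h2x starting at S ≤ T'
    suffices H : ∀ {S T2 : ℤ} {Ω2 Ω2' : Conf}, MultiStep step S Ω2 T2 Ω2' → S ≤ T' →
        MultiStep step S (comp Ω1 Ω2) (max T1 T2) (comp Ω1' Ω2') by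
      exact H h2 hTT'
    intro S T2 Ω2 Ω2' h2x
    induction h2x with
    | refl S Ω2x =>
      intro hS
      rw [max_eq_left (le_trans hS rest.le)]
      exact .stepT hS (rest.liftL frameL Ω2x)
    | stepT hSS' rest2 ih2 =>
      intro hS
      rcases le_or_gt _ T' with h' | h'
      · exact .stepT hSS' (ih2 h')
      · exact .stepT hS (ih (.stepT h'.le rest2))
    | stepC s2 rest2 ih2 =>
      intro hS
      exact .stepC (frameR _ _ _ _ s2) (ih2 hS)
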